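/- arXiv:2012.13998 — 4 statements merged into one kernel-verified Lean document; each statement's English description precedes it below -/
import Mathlib

section
/- Fix τ ≥ 1 and k > τ + 1. For each C > 0 define B_{C,k} := {α ∈ ℝ : |α - p/q^τ| ≥ C/q^k for all p ∈ ℤ and q ∈ ℕ}. Then the complement of the union ∪_{C>0} B_{C,k} has Lebesgue measure zero. Equivalently, for almost every α ∈ ℝ there exists C > 0 such that |α - p/q^τ| ≥ C/q^k for all rationals p/q. -/
/-!
Near `α` with `|α| ≤ N`, a point `p / q^τ` at distance less than `C / q^k ≤ 1` has
`|p| ≤ ⌈(N + 1) q^τ⌉`, so the points of `[-N, N]` lying in no `B_{C,k}` are covered, for every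
`C ∈ (0, 1]`, by `O(N q^τ)` intervals of length `2C / q^k` for each `q`. Their total length is
`O(C N ∑ q^(τ-k))`, finite because `k - τ > 1`; letting `C → 0`, the exceptional set is null.
-/

open Set MeasureTheory

/-- the set of α that are C/q^k-far from all numbers p/q^τ -/
noncomputable def Bset (τ C k : ℝ) : Set ℝ :=
  {α : ℝ | ∀ (p : ℤ) (q : ℕ), 0 < q → C / (q : ℝ) ^ k ≤ |α - (p : ℝ) / (q : ℝ) ^ τ|}

open Filter Topology Metric

noncomputable def latticeWindow (N h : ℝ) : Finset ℤ :=
  Finset.Icc (-⌈(N + 1) * h⌉) ⌈(N + 1) * h⌉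

def approxCover (τ k C N : ℝ) : Set ℝ :=
  ⋃ q : ℕ, ⋃ (_ : 0 < q), ⋃ p ∈ latticeWindow N ((q : ℝ) ^ τ),
    ball ((p : ℝ) / (q : ℝ) ^ τ) (C / (q : ℝ) ^ k)

lemma mem_latticeWindow {N h α r : ℝ} {p : ℤ} (hh : 0 < h) (hα : |α| ≤ N) (hr : r ≤ 1)
    (hp : |α - p / h| < r) : p ∈ latticeWindow N h := by
  have hph : |(p : ℝ) / h| ≤ N + 1 := by
    have := abs_sub_abs_le_abs_sub ((p : ℝ) / h) α
    rw [abs_sub_comm] at this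
    linarith
  rw [abs_div, abs_of_pos hh, div_le_iff₀ hh] at hph
  have hp_le : ((|p| : ℤ) : ℝ) ≤ ⌈(N + 1) * h⌉ := by
    push_cast
    linarith [Int.le_ceil ((N + 1) * h)]
  rw [latticeWindow, Finset.mem_Icc, ← abs_le]
  exact_mod_cast hp_le

lemma card_latticeWindow_le {N h : ℝ} (hN : 0 ≤ N) (hh : 1 ≤ h) :
    ((latticeWindow N h).card : ℝ) ≤ (2 * N + 5) * h := by
  have hM : 0 ≤ ⌈(N + 1) * h⌉ := Int.ceil_nonneg (by positivity)
  have hcard : ((latticeWindow N h).card : ℤ) = 2 * ⌈(N + 1) * h⌉ + 1 := by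
    rw [latticeWindow, Int.card_Icc, Int.toNat_of_nonneg (by omega)]
    ring
  have hcard' : ((latticeWindow N h).card : ℝ) = 2 * ⌈(N + 1) * h⌉ + 1 := by
    exact_mod_cast hcard
  rw [hcard']
  nlinarith [Int.ceil_lt_add_one ((N + 1) * h)]

lemma volume_biUnion_latticeWindow_ball_le {N h : ℝ} (hN : 0 ≤ N) (hh : 1 ≤ h) (r : ℝ) :
    volume (⋃ p ∈ latticeWindow N h, ball ((p : ℝ) / h) r) ≤
      ENNReal.ofReal ((2 * N + 5) * h * (2 * r)) := by
  calc volume (⋃ p ∈ latticeWindow N h, ball ((p : ℝ) / h) r)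
      ≤ ∑ p ∈ latticeWindow N h, volume (ball ((p : ℝ) / h) r) := measure_biUnion_finset_le _ _
    _ = ENNReal.ofReal ((latticeWindow N h).card) * ENNReal.ofReal (2 * r) := by
      simp [Real.volume_ball]
    _ ≤ ENNReal.ofReal ((2 * N + 5) * h) * ENNReal.ofReal (2 * r) := by
      gcongr
      exact card_latticeWindow_le hN hh
    _ = ENNReal.ofReal ((2 * N + 5) * h * (2 * r)) :=
      (ENNReal.ofReal_mul (by positivity)).symm

lemma compl_iUnion_Bset_inter_closedBall_subset {τ k C N : ℝ} (hk : 0 ≤ k) (hC : 0 < C)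
    (hC1 : C ≤ 1) :
    (⋃ C ∈ Ioi (0 : ℝ), Bset τ C k)ᶜ ∩ closedBall 0 N ⊆ approxCover τ k C N := by
  rintro α ⟨hα, hαN⟩
  have hnot : α ∉ Bset τ C k := fun h => hα (mem_biUnion hC h)
  simp only [Bset, mem_ofPred_eq, not_forall, not_le] at hnot
  obtain ⟨p, q, hq, hpq⟩ := hnot
  have hq1 : (1 : ℝ) ≤ q := by exact_mod_cast hq
  have hr : C / (q : ℝ) ^ k ≤ 1 :=
    div_le_one_of_le₀ (hC1.trans (Real.one_le_rpow hq1 hk)) (by positivity)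
  rw [mem_closedBall_zero_iff, Real.norm_eq_abs] at hαN
  simp only [approxCover, mem_iUnion]
  exact ⟨q, hq, p, mem_latticeWindow (by positivity) hαN hr hpq, by rwa [mem_ball, Real.dist_eq]⟩

lemma volume_approxCover_le {τ k N C : ℝ} (hτ : 0 ≤ τ) (hk : τ + 1 < k) (hN : 0 ≤ N)
    (hC : 0 ≤ C) :
    volume (approxCover τ k C N) ≤
      ENNReal.ofReal (C * (2 * (2 * N + 5) * ∑' q : ℕ, (q : ℝ) ^ (τ - k))) := by
  have hsum : Summable (fun q : ℕ => (q : ℝ) ^ (τ - k)) :=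
    Real.summable_nat_rpow.mpr (by linarith)
  have hterm : ∀ q : ℕ, volume (⋃ (_ : 0 < q), ⋃ p ∈ latticeWindow N ((q : ℝ) ^ τ),
      ball ((p : ℝ) / (q : ℝ) ^ τ) (C / (q : ℝ) ^ k)) ≤
        ENNReal.ofReal (C * (2 * (2 * N + 5)) * (q : ℝ) ^ (τ - k)) := by
    intro q
    rcases Nat.eq_zero_or_pos q with rfl | hq
    · simp
    have hq0 : (0 : ℝ) < q := by exact_mod_cast hq
    have hmass : (2 * N + 5) * (q : ℝ) ^ τ * (2 * (C / (q : ℝ) ^ k)) =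
        C * (2 * (2 * N + 5)) * (q : ℝ) ^ (τ - k) := by
      rw [Real.rpow_sub hq0]
      ring
    simpa only [hq, iUnion_true, hmass] using volume_biUnion_latticeWindow_ball_le hN
      (Real.one_le_rpow (Nat.one_le_cast.mpr hq) hτ) (C / (q : ℝ) ^ k)
  calc volume (approxCover τ k C N)
      ≤ ∑' q : ℕ, ENNReal.ofReal (C * (2 * (2 * N + 5)) * (q : ℝ) ^ (τ - k)) :=
        (measure_iUnion_le _).trans (ENNReal.tsum_le_tsum hterm)
    _ = ENNReal.ofReal (C * (2 * (2 * N + 5) * ∑' q : ℕ, (q : ℝ) ^ (τ - k))) := by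
      rw [← ENNReal.ofReal_tsum_of_nonneg (fun q => by positivity) (hsum.mul_left _),
        tsum_mul_left, mul_assoc]

lemma measure_eq_zero_of_eventually_le_ofReal_mul {α : Type*} [MeasurableSpace α]
    {μ : Measure α} {s : Set α} (A : ℝ)
    (h : ∀ᶠ C in 𝓝[>] (0 : ℝ), μ s ≤ ENNReal.ofReal (C * A)) : μ s = 0 := by
  have hlim : Tendsto (fun C : ℝ => ENNReal.ofReal (C * A)) (𝓝 0) (𝓝 (ENNReal.ofReal (0 * A))) :=
    (ENNReal.continuous_ofReal.comp (continuous_mul_const A)).tendsto 0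
  rw [zero_mul, ENNReal.ofReal_zero] at hlim
  exact le_antisymm (ge_of_tendsto (hlim.mono_left nhdsWithin_le_nhds) h) bot_le

theorem stmt7 (τ k : ℝ) (hτ : 1 ≤ τ) (hk : τ + 1 < k) :
    volume (⋃ C ∈ Set.Ioi (0:ℝ), Bset τ C k)ᶜ = 0 := by
  set E := (⋃ C ∈ Set.Ioi (0:ℝ), Bset τ C k)ᶜ
  have hE : E = ⋃ N : ℕ, E ∩ closedBall 0 N := by
    rw [← inter_iUnion, iUnion_closedBall_nat, inter_univ]
  rw [hE, measure_iUnion_null_iff]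
  intro N
  apply measure_eq_zero_of_eventually_le_ofReal_mul
  filter_upwards [Ioc_mem_nhdsGT one_pos] with C ⟨hC, hC1⟩
  exact (measure_mono (compl_iUnion_Bset_inter_closedBall_subset (by linarith) hC hC1)).trans
    (volume_approxCover_le (by linarith) hk N.cast_nonneg hC.le)
end

section
/- Let τ > 1, γ > 0, α ∈ D_{γ,τ} with convergents p_n/q_n. Then for each even n, the inequality p_n/q_n + γ/q_n^{τ+1} < p_{n+2}/q_{n+2} - γ/q_{n+2}^{τ+1} holds if and only if a_{n+2} > (q_n/(γ q_{n+1})) · 1/((1/γ - q_{n+1}/q_n^τ) - q_n q_{n+1}/q_{n+2}^{τ+1}) - q_n/q_{n+1}. Moreover the quantity 1/γ - q_{n+1}/q_n^τ - q_n q_{n+1}/q_{n+2}^{τ+1} is always positive. -/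
open Set MeasureTheory

/-- distance to the nearest integer -/
noncomputable def nint (x : ℝ) : ℝ := ⨅ p : ℤ, |x - (p : ℝ)|

/-- the set of (γ,τ)-Diophantine numbers in (0,1) -/
noncomputable def Dio (γ τ : ℝ) : Set ℝ :=
  {α ∈ Set.Ioo (0:ℝ) 1 | ∀ q : ℕ, 0 < q → γ / (q : ℝ) ^ τ ≤ nint (q * α)}

/-- denominator of the n-th convergent of α -/
noncomputable def qden (α : ℝ) (n : ℕ) : ℝ := (GenContFract.of α).dens n

/-- numerator of the n-th convergent of α -/
noncomputable def pnum (α : ℝ) (n : ℕ) : ℝ := (GenContFract.of α).nums n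

namespace StmtAux

open GenContFract

lemma not_term {α : ℝ} (hirr : Irrational α) (m : ℕ) :
    ¬(GenContFract.of α).TerminatedAt m := by
  intro h
  have ht : (GenContFract.of α).Terminates := ⟨m, h⟩
  rw [GenContFract.terminates_iff_rat] at ht
  obtain ⟨q, hq⟩ := ht
  exact hirr ⟨q, hq.symm⟩

lemma stream_some {α : ℝ} (hirr : Irrational α) (m : ℕ) :
    ∃ ifp, IntFractPair.stream α m = some ifp := by
  cases m with
  | zero => exact ⟨_, IntFractPair.stream_zero α⟩
  | succ k =>
    have h := not_term hirr k
    rw [of_terminatedAt_n_iff_succ_nth_intFractPair_stream_eq_none] at h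
    exact Option.ne_none_iff_exists'.1 h

lemma one_le_den {α : ℝ} (hirr : Irrational α) (m : ℕ) :
    (1 : ℝ) ≤ (GenContFract.of α).dens m := by
  have h := succ_nth_fib_le_of_nth_den (v := α) (n := m)
    (Or.inr (not_term hirr _))
  have h2 : (1 : ℕ) ≤ Nat.fib (m + 1) := Nat.fib_pos.2 m.succ_pos
  calc (1:ℝ) ≤ (Nat.fib (m+1) : ℝ) := by exact_mod_cast h2
    _ ≤ _ := h

lemma num_den_int {α : ℝ} (hirr : Irrational α) (m : ℕ) :
    (∃ z : ℤ, (GenContFract.of α).nums m = (z : ℝ)) ∧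
      (∃ z : ℤ, (GenContFract.of α).dens m = (z : ℝ)) := by
  induction m using Nat.strong_induction_on with
  | _ m IH =>
    match m with
    | 0 =>
      refine ⟨⟨⌊α⌋, ?_⟩, ⟨1, ?_⟩⟩
      · rw [zeroth_num_eq_h, of_h_eq_floor]
      · rw [zeroth_den_eq_one]; norm_num
    | 1 =>
      obtain ⟨ifp1, hifp1⟩ := stream_some hirr 1
      have hs0 : (GenContFract.of α).s.get? 0 = some ⟨1, (ifp1.b : ℝ)⟩ :=
        get?_of_eq_some_of_succ_get?_intFractPair_stream hifp1
      refine ⟨⟨ifp1.b * ⌊α⌋ + 1, ?_⟩, ⟨ifp1.b, ?_⟩⟩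
      · rw [first_num_eq hs0, of_h_eq_floor]; push_cast; ring
      · rw [first_den_eq hs0]
    | (k + 2) =>
      obtain ⟨ifpk, hifpk⟩ := stream_some hirr (k + 2)
      have hs : (GenContFract.of α).s.get? (k + 1) = some ⟨1, (ifpk.b : ℝ)⟩ :=
        get?_of_eq_some_of_succ_get?_intFractPair_stream hifpk
      obtain ⟨⟨zn, hzn⟩, ⟨zd, hzd⟩⟩ := IH k (by omega)
      obtain ⟨⟨zn', hzn'⟩, ⟨zd', hzd'⟩⟩ := IH (k + 1) (by omega)
      constructor
      · refine ⟨ifpk.b * zn' + zn, ?_⟩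
        rw [nums_recurrence hs hzn hzn']; push_cast; ring
      · refine ⟨ifpk.b * zd' + zd, ?_⟩
        rw [dens_recurrence hs hzd hzd']; push_cast; ring

private lemma aux_main {A B C At Ct γ a P Q : ℝ}
    (hA : 1 ≤ A) (hAB : A ≤ B) (hCeq : C = a * B + A) (ha : 1 ≤ a) (hγ : 0 < γ)
    (hAt : 0 < At) (hCt : 0 < Ct) (hACt : At * C ≤ Ct * A)
    (hkey : γ / At < 1 / (B + A / (a + 1)))
    (hdet : Q * A - P * C = a) :
    0 < 1 / γ - B / At - A * B / (Ct * C) ∧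
      (P / A + γ / (At * A) < Q / C - γ / (Ct * C) ↔
        a > A / (γ * B) * (1 / ((1 / γ - B / At) - A * B / (Ct * C))) - A / B) := by
  have hA0 : 0 < A := by linarith
  have hB0 : 0 < B := by linarith
  have hC0 : 0 < C := by nlinarith
  have hs : 0 < a + 1 := by linarith
  have hd0 : 0 < B + A / (a + 1) := by positivity
  have h1 : γ * (B + A / (a + 1)) < At := by
    rw [div_lt_div_iff₀ hAt hd0] at hkey; nlinarith [hkey]
  have hXgt : A / ((a + 1) * At) < 1 / γ - B / At := by
    have h2 : (A / (a + 1) + B) / At < 1 / γ := by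
      rw [div_lt_div_iff₀ hAt hγ]; nlinarith [h1]
    have e : (A / (a + 1) + B) / At = A / ((a + 1) * At) + B / At := by
      rw [add_div, div_div]
    linarith [e ▸ h2]
  have hC2 : A * B * (a + 1) ≤ C ^ 2 := by
    rw [hCeq]
    nlinarith [mul_le_mul_of_nonneg_right hAB hB0.le,
      mul_nonneg (sub_nonneg.2 ha) (mul_pos hA0 hB0).le,
      mul_nonneg (mul_nonneg (sub_nonneg.2 ha) hs.le) (mul_pos hB0 hB0).le,
      sq_nonneg A]
  have hABle : A * B / (Ct * C) ≤ A / ((a + 1) * At) := by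
    rw [div_le_div_iff₀ (by positivity) (by positivity)]
    nlinarith [mul_le_mul_of_nonneg_right hACt hC0.le,
      mul_le_mul_of_nonneg_right hC2 hAt.le]
  have hX' : 0 < 1 / γ - B / At - A * B / (Ct * C) := by linarith
  refine ⟨hX', ?_⟩
  have hQC : Q / C - P / A = a / (A * C) := by
    field_simp
    linear_combination hdet
  have e1 : (γ / (At * A) + γ / (Ct * C)) * (A * C) = γ * C / At + γ * A / Ct := by
    field_simp
  have iffsub : (γ / (At * A) + γ / (Ct * C) < a / (A * C)) ↔ (γ * C / At + γ * A / Ct < a) := by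
    rw [lt_div_iff₀ (show (0:ℝ) < A * C by positivity), e1]
  have iffL : (P / A + γ / (At * A) < Q / C - γ / (Ct * C)) ↔
      (γ * C / At + γ * A / Ct < a) := by
    constructor
    · intro h; exact iffsub.mp (by linarith)
    · intro h; have := iffsub.mpr h; linarith
  rw [iffL]
  generalize hX : 1 / γ - B / At - A * B / (Ct * C) = X at hX' ⊢
  have eX : A / (γ * B) * (1 / X) = A / (γ * B * X) := by
    rw [div_mul_div_comm, mul_one]
  have hγBX : 0 < γ * B * X := mul_pos (mul_pos hγ hB0) hX'
  have eab : (a + A / B) * B = C := by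
    field_simp; linarith [hCeq]
  have e3 : (a + A / B) * (γ * B * X) = γ * C * X := by
    calc (a + A / B) * (γ * B * X) = ((a + A / B) * B) * (γ * X) := by ring
    _ = γ * C * X := by rw [eab]; ring
  have e4 : γ * C * X = C - γ * C * B / At - γ * A * B / Ct := by
    rw [← hX]
    field_simp [hγ.ne', hAt.ne', hCt.ne', hC0.ne']
  have e5 : (γ * C / At + γ * A / Ct) * B = γ * C * B / At + γ * A * B / Ct := by ring
  constructor
  · intro h
    have h6 : γ * C * B / At + γ * A * B / Ct < a * B := by
      have := mul_lt_mul_of_pos_right h hB0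
      linarith [e5]
    have h7 : A < γ * C * X := by
      rw [e4]; linarith [hCeq]
    have h8 : A < (a + A / B) * (γ * B * X) := by rw [e3]; exact h7
    have h9 : A / (γ * B * X) < a + A / B := (div_lt_iff₀ hγBX).2 h8
    show A / (γ * B) * (1 / X) - A / B < a
    rw [eX]; linarith
  · intro h
    have h' : A / (γ * B) * (1 / X) - A / B < a := h
    rw [eX] at h'
    have h9 : A / (γ * B * X) < a + A / B := by linarith
    have h8 : A < (a + A / B) * (γ * B * X) := (div_lt_iff₀ hγBX).1 h9
    have h7 : A < γ * C * X := by rw [← e3]; exact h8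
    have h6 : γ * C * B / At + γ * A * B / Ct < a * B := by
      rw [e4] at h7; linarith [hCeq]
    have h5 : (γ * C / At + γ * A / Ct) * B < a * B := by linarith [e5]
    exact lt_of_mul_lt_mul_right h5 hB0.le

end StmtAux

theorem stmt14 (γ τ : ℝ) (hγ : 0 < γ) (hτ : 1 < τ) (α : ℝ) (hα : α ∈ Dio γ τ)
    (hirr : Irrational α) (n : ℕ) (hn : Even n) (a : ℝ)
    (ha : qden α (n + 2) = a * qden α (n + 1) + qden α n) :
    0 < 1 / γ - qden α (n + 1) / (qden α n) ^ τ -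
        qden α n * qden α (n + 1) / (qden α (n + 2)) ^ (τ + 1) ∧
    (pnum α n / qden α n + γ / (qden α n) ^ (τ + 1) <
        pnum α (n + 2) / qden α (n + 2) - γ / (qden α (n + 2)) ^ (τ + 1) ↔
      a > qden α n / (γ * qden α (n + 1)) *
            (1 / ((1 / γ - qden α (n + 1) / (qden α n) ^ τ) -
              qden α n * qden α (n + 1) / (qden α (n + 2)) ^ (τ + 1))) -
          qden α n / qden α (n + 1)) := by
  obtain ⟨-, hDio⟩ := hα
  unfold qden at ha
  unfold qden pnum
  set g := GenContFract.of α with hg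
  -- streams
  obtain ⟨ifp0, hifp0⟩ := StmtAux.stream_some hirr n
  obtain ⟨ifp1, hifp1⟩ := StmtAux.stream_some hirr (n + 1)
  obtain ⟨ifp2, hifp2⟩ := StmtAux.stream_some hirr (n + 2)
  obtain ⟨ifp0', h0', hfr0, hof1⟩ :=
    GenContFract.IntFractPair.succ_nth_stream_eq_some_iff.1 hifp1
  rw [hifp0] at h0'
  obtain rfl : ifp0 = ifp0' := Option.some.inj h0'
  obtain ⟨ifp1', h1', hfr1, hof2⟩ :=
    GenContFract.IntFractPair.succ_nth_stream_eq_some_iff.1 hifp2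
  rw [hifp1] at h1'
  obtain rfl : ifp1 = ifp1' := Option.some.inj h1'
  have hb1 : ifp1.b = ⌊ifp0.fr⁻¹⌋ := by rw [← hof1]; rfl
  have hf1 : ifp1.fr = Int.fract ifp0.fr⁻¹ := by rw [← hof1]; rfl
  have hb2 : ifp2.b = ⌊ifp1.fr⁻¹⌋ := by rw [← hof2]; rfl
  have hs0 : g.s.get? n = some ⟨1, (ifp1.b : ℝ)⟩ :=
    GenContFract.get?_of_eq_some_of_succ_get?_intFractPair_stream hifp1
  have hs1 : g.s.get? (n + 1) = some ⟨1, (ifp2.b : ℝ)⟩ :=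
    GenContFract.get?_of_eq_some_of_succ_get?_intFractPair_stream hifp2
  -- positivity of denominators
  have hA1 : (1 : ℝ) ≤ g.dens n := StmtAux.one_le_den hirr n
  have hB1 : (1 : ℝ) ≤ g.dens (n + 1) := StmtAux.one_le_den hirr (n + 1)
  have hC1 : (1 : ℝ) ≤ g.dens (n + 2) := StmtAux.one_le_den hirr (n + 2)
  have hA0 : (0 : ℝ) < g.dens n := by linarith
  have hB0 : (0 : ℝ) < g.dens (n + 1) := by linarith
  have hC0 : (0 : ℝ) < g.dens (n + 2) := by linarith
  have hAB : g.dens n ≤ g.dens (n + 1) := GenContFract.of_den_mono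
  have hBC : g.dens (n + 1) ≤ g.dens (n + 2) := GenContFract.of_den_mono
  have hAC : g.dens n ≤ g.dens (n + 2) := le_trans hAB hBC
  -- recurrences at level n+2
  have hCrec : g.dens (n + 2) = (ifp2.b : ℝ) * g.dens (n + 1) + g.dens n := by
    simpa using GenContFract.dens_recurrence hs1 rfl rfl
  have hQrec : g.nums (n + 2) = (ifp2.b : ℝ) * g.nums (n + 1) + g.nums n := by
    simpa using GenContFract.nums_recurrence hs1 rfl rfl
  have hab : a = (ifp2.b : ℝ) := by
    have h : a * g.dens (n + 1) = (ifp2.b : ℝ) * g.dens (n + 1) := by linarith [ha, hCrec]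
    exact mul_right_cancel₀ hB0.ne' h
  have ha1 : (1 : ℝ) ≤ a := by
    rw [hab]
    exact_mod_cast GenContFract.IntFractPair.one_le_succ_nth_stream_b hifp2
  -- determinant
  have hdet0 : g.nums n * g.dens (n + 1) - g.dens n * g.nums (n + 1) = (-1 : ℝ) ^ (n + 1) :=
    SimpContFract.determinant (s := SimpContFract.of α) (StmtAux.not_term hirr n)
  have hneg : ((-1 : ℝ)) ^ (n + 1) = -1 := Odd.neg_one_pow (Even.add_one hn)
  have hdet1 : g.dens n * g.nums (n + 1) - g.nums n * g.dens (n + 1) = 1 := by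
    rw [hneg] at hdet0; linarith
  have hQ : g.nums (n + 2) = a * g.nums (n + 1) + g.nums n := by rw [hab]; exact hQrec
  have hdet : g.nums (n + 2) * g.dens n - g.nums n * g.dens (n + 2) = a := by
    linear_combination g.dens n * hQ - g.nums n * ha + a * hdet1
  -- Diophantine bound
  obtain ⟨⟨zP, hzP⟩, ⟨zA, hzA⟩⟩ := StmtAux.num_den_int hirr n
  have hzA0 : (0 : ℤ) < zA := by
    have h1 : (1 : ℝ) ≤ (zA : ℝ) := by rw [← hzA]; exact hA1
    have h2 : (0 : ℝ) < (zA : ℝ) := by linarith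
    exact_mod_cast h2
  have hqn : 0 < zA.toNat := by omega
  have hcast : ((zA.toNat : ℕ) : ℝ) = g.dens n := by
    rw [hzA]; exact_mod_cast Int.toNat_of_nonneg hzA0.le
  have hDio' : γ / (g.dens n) ^ τ ≤ nint (g.dens n * α) := by
    have h := hDio zA.toNat hqn
    rwa [hcast] at h
  have hnile : nint (g.dens n * α) ≤ |g.dens n * α - g.nums n| := by
    have h : nint (g.dens n * α) ≤ |g.dens n * α - (zP : ℝ)| :=
      ciInf_le ⟨0, by rintro x ⟨p, rfl⟩; exact abs_nonneg _⟩ zP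
    rwa [← hzP] at h
  -- exact error formula
  have hsub : α - g.convs n = if ifp0.fr = 0 then 0 else
      (-1) ^ n / ((g.contsAux (n + 1)).b *
        (ifp0.fr⁻¹ * (g.contsAux (n + 1)).b + (g.contsAux n).b)) :=
    GenContFract.sub_convs_eq hifp0
  rw [if_neg hfr0] at hsub
  have hAc : (g.contsAux (n + 1)).b = g.dens n := by
    rw [GenContFract.den_eq_conts_b, GenContFract.nth_cont_eq_succ_nth_contAux]
  set pb := (g.contsAux n).b with hpb
  have hpb0 : 0 ≤ pb := GenContFract.zero_le_of_contsAux_b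
  have hBrec : g.dens (n + 1) = (ifp1.b : ℝ) * g.dens n + pb := by
    have h := GenContFract.contsAux_recurrence hs0 rfl rfl
    have h2 : g.dens (n + 1) = (g.contsAux (n + 2)).b := by
      rw [GenContFract.den_eq_conts_b, GenContFract.nth_cont_eq_succ_nth_contAux]
    rw [h2, h]
    simp [hAc]
    exact hpb.symm
  have hfrinv : ifp0.fr⁻¹ = (ifp1.b : ℝ) + ifp1.fr := by
    rw [hb1, hf1]
    exact (Int.floor_add_fract _).symm
  have hD : ifp0.fr⁻¹ * g.dens n + pb = g.dens (n + 1) + ifp1.fr * g.dens n := by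
    rw [hfrinv]; linear_combination -hBrec
  have hconv : α - g.nums n / g.dens n =
      1 / (g.dens n * (g.dens (n + 1) + ifp1.fr * g.dens n)) := by
    rw [← GenContFract.conv_eq_num_div_den, hsub, hAc, hD, Even.neg_one_pow hn]
  have hfpos : 0 < ifp1.fr :=
    lt_of_le_of_ne (GenContFract.IntFractPair.nth_stream_fr_nonneg hifp1) (Ne.symm hfr1)
  have hden2 : 0 < g.dens (n + 1) + ifp1.fr * g.dens n := by positivity
  have habs : |g.dens n * α - g.nums n| =
      1 / (g.dens (n + 1) + ifp1.fr * g.dens n) := by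
    have e : g.dens n * α - g.nums n = g.dens n * (α - g.nums n / g.dens n) := by
      field_simp
    rw [e, hconv]
    have e2 : g.dens n * (1 / (g.dens n * (g.dens (n + 1) + ifp1.fr * g.dens n))) =
        1 / (g.dens (n + 1) + ifp1.fr * g.dens n) := by
      field_simp
    rw [e2]
    exact abs_of_pos (by positivity)
  have hkey0 : γ / (g.dens n) ^ τ ≤ 1 / (g.dens (n + 1) + ifp1.fr * g.dens n) := by
    calc γ / (g.dens n) ^ τ ≤ nint (g.dens n * α) := hDio'
      _ ≤ |g.dens n * α - g.nums n| := hnile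
      _ = _ := habs
  have hb2f : ifp1.fr⁻¹ < a + 1 := by
    rw [hab]
    have h := Int.lt_floor_add_one ifp1.fr⁻¹
    rw [← hb2] at h
    exact_mod_cast h
  have hfgt : (a + 1)⁻¹ < ifp1.fr := by
    have h := inv_strictAnti₀ (inv_pos.2 hfpos) hb2f
    rwa [inv_inv] at h
  have hkey : γ / (g.dens n) ^ τ < 1 / (g.dens (n + 1) + g.dens n / (a + 1)) := by
    have h1 : g.dens n / (a + 1) < ifp1.fr * g.dens n := by
      rw [div_eq_mul_inv, mul_comm]
      exact mul_lt_mul_of_pos_right hfgt hA0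
    have h2 : 1 / (g.dens (n + 1) + ifp1.fr * g.dens n) <
        1 / (g.dens (n + 1) + g.dens n / (a + 1)) := by
      apply one_div_lt_one_div_of_lt
      · positivity
      · linarith
    linarith
  -- rpow facts
  have hAt : (0 : ℝ) < (g.dens n) ^ τ := Real.rpow_pos_of_pos hA0 τ
  have hCt : (0 : ℝ) < (g.dens (n + 2)) ^ τ := Real.rpow_pos_of_pos hC0 τ
  have hACt : (g.dens n) ^ τ * g.dens (n + 2) ≤ (g.dens (n + 2)) ^ τ * g.dens n := by
    have h := Real.rpow_le_rpow hA0.le hAC (by linarith : (0 : ℝ) ≤ τ - 1)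
    rw [Real.rpow_sub hA0, Real.rpow_sub hC0, Real.rpow_one, Real.rpow_one] at h
    rw [div_le_div_iff₀ hA0 hC0] at h
    linarith
  rw [Real.rpow_add_one hA0.ne' τ, Real.rpow_add_one hC0.ne' τ]
  exact StmtAux.aux_main hA1 hAB ha ha1 hγ hAt hCt hACt hkey hdet
end

section
/- Let τ > 3, γ > 0, α ∈ D_{γ,τ} with convergents p_n/q_n, and let I_n := (p_n/q_n, p_{n+2}/q_{n+2}). Then there exists N such that for all even n > N, the total Lebesgue measure of the union over all rationals p/q ∈ I_n with q ≥ q_{n+2} of the intervals (p/q − γ/q^{τ+1}, p/q + γ/q^{τ+1}) is less than 2γ/q_{n+2}^{τ−1}. -/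
open Set MeasureTheory

set_option maxHeartbeats 1000000 in
theorem stmt15 (γ τ : ℝ) (hγ : 0 < γ) (hτ : 3 < τ) (α : ℝ) (hα : α ∈ Dio γ τ)
    (hirr : Irrational α) :
    ∃ N : ℕ, ∀ n > N, Even n →
      volume (⋃ (q : ℕ) (p : ℤ) (_ : qden α (n + 2) ≤ (q : ℝ))
          (_ : (p : ℝ) / q ∈ Set.Ioo (pnum α n / qden α n) (pnum α (n + 2) / qden α (n + 2))),
          Set.Ioo ((p : ℝ) / q - γ / (q : ℝ) ^ (τ + 1)) ((p : ℝ) / q + γ / (q : ℝ) ^ (τ + 1)))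
        < ENNReal.ofReal (2 * γ / (qden α (n + 2)) ^ (τ - 1)) := by
  have hnt : ∀ k : ℕ, ¬(GenContFract.of α).TerminatedAt k := by
    intro k hk
    obtain ⟨q, hq⟩ := (GenContFract.terminates_iff_rat α).mp ⟨k, hk⟩
    exact hirr ⟨q, hq.symm⟩
  have hfib : ∀ k : ℕ, (Nat.fib (k + 1) : ℝ) ≤ qden α k := by
    intro k
    simpa [qden] using
      GenContFract.succ_nth_fib_le_of_nth_den (v := α) (n := k) (Or.inr (hnt _))
  have hqpos : ∀ k, 0 < qden α k := by
    intro k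
    refine lt_of_lt_of_le ?_ (hfib k)
    exact_mod_cast Nat.fib_pos.mpr k.succ_pos
  have hmono : ∀ k, qden α k ≤ qden α (k + 1) := by
    intro k; simpa [qden] using GenContFract.of_den_mono (v := α) (n := k)
  have habs : ∀ k, |α - pnum α k / qden α k| ≤ 1 / (qden α k) ^ 2 := by
    intro k
    have h := GenContFract.abs_sub_convs_le (v := α) (hnt k)
    rw [GenContFract.conv_eq_num_div_den] at h
    simp only [qden, pnum]
    refine h.trans ?_
    rw [sq]
    apply one_div_le_one_div_of_le (mul_pos (hqpos k) (hqpos k))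
    exact mul_le_mul_of_nonneg_left (hmono k) (hqpos k).le
  refine ⟨4, fun n hn _ => ?_⟩
  have hn5 : 5 ≤ n := hn
  set Q : ℝ := qden α (n + 2) with hQdef
  set a : ℝ := pnum α n / qden α n with hadef
  set b : ℝ := pnum α (n + 2) / Q with hbdef
  set d : ℝ := |b - a| with hddef
  have h8qn : (8 : ℝ) ≤ qden α n := by
    have h1 : (8 : ℕ) ≤ Nat.fib (n + 1) := by
      calc (8 : ℕ) = Nat.fib 6 := by decide
        _ ≤ Nat.fib (n + 1) := Nat.fib_mono (by omega)
    exact le_trans (by exact_mod_cast h1) (hfib n)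
  have hQn : qden α n ≤ Q := (hmono n).trans (hmono (n + 1))
  have h8Q : (8 : ℝ) ≤ Q := h8qn.trans hQn
  have hQpos : (0 : ℝ) < Q := lt_of_lt_of_le (by norm_num) h8Q
  have hd0 : (0 : ℝ) ≤ d := abs_nonneg _
  have hqn2pos : (0 : ℝ) < (qden α n) ^ 2 := pow_pos (hqpos n) 2
  have hd : d ≤ 1 / 32 := by
    have h1 : |α - a| ≤ 1 / (qden α n) ^ 2 := habs n
    have h2 : |α - b| ≤ 1 / (qden α n) ^ 2 := by
      refine (habs (n + 2)).trans ?_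
      apply one_div_le_one_div_of_le hqn2pos
      exact pow_le_pow_left₀ (hqpos n).le hQn 2
    have h3 : 1 / (qden α n) ^ 2 ≤ 1 / 64 := by
      apply one_div_le_one_div_of_le (by norm_num)
      nlinarith [h8qn]
    have h4 : |b - a| ≤ |b - α| + |α - a| := abs_sub_le b α a
    have h5 : |b - α| = |α - b| := abs_sub_comm _ _
    rw [hddef]
    linarith
  set m : ℕ := ⌈Q⌉₊ with hmdef
  have hQm : Q ≤ (m : ℝ) := Nat.le_ceil Q
  have hm8 : 8 ≤ m := by exact_mod_cast h8Q.trans hQm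
  set K : ℝ := 2 * γ * (d + 1 / Q) * Q ^ ((2 : ℝ) - τ) with hKdef
  have hdQ0 : (0 : ℝ) ≤ d + 1 / Q := by positivity
  have hQ2τ : (0 : ℝ) < Q ^ ((2 : ℝ) - τ) := Real.rpow_pos_of_pos hQpos _
  have hK0 : 0 ≤ K := by
    apply mul_nonneg (mul_nonneg (by linarith) hdQ0) hQ2τ.le
  have hB : ∀ q : ℕ, volume (⋃ (p : ℤ) (_ : Q ≤ (q : ℝ)) (_ : (p : ℝ) / q ∈ Set.Ioo a b),
      Set.Ioo ((p : ℝ) / q - γ / (q : ℝ) ^ (τ + 1)) ((p : ℝ) / q + γ / (q : ℝ) ^ (τ + 1)))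
      ≤ if m ≤ q then ENNReal.ofReal (K * (((q : ℝ)) ^ 2)⁻¹) else 0 := by
    intro q
    by_cases hq : m ≤ q
    · rw [if_pos hq]
      have hqQ : Q ≤ (q : ℝ) := le_trans hQm (by exact_mod_cast hq)
      have hq8 : (8 : ℝ) ≤ (q : ℝ) := h8Q.trans hqQ
      have hq0 : (0 : ℝ) < (q : ℝ) := by linarith
      have hxp : (0 : ℝ) < (q : ℝ) ^ (τ + 1) := Real.rpow_pos_of_pos hq0 _
      set T : Finset ℤ := Finset.Ioo ⌊(q : ℝ) * a⌋ ⌈(q : ℝ) * b⌉ with hTdef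
      have hsub : ∀ p : ℤ, (p : ℝ) / q ∈ Set.Ioo a b → p ∈ T := by
        intro p hp
        rw [Set.mem_Ioo] at hp
        rw [hTdef, Finset.mem_Ioo]
        constructor
        · rw [Int.floor_lt]
          have := (lt_div_iff₀ hq0).mp hp.1
          linarith
        · rw [Int.lt_ceil]
          have := (div_lt_iff₀ hq0).mp hp.2
          linarith
      have hcard : (T.card : ℝ) ≤ (q : ℝ) * d + 1 := by
        rw [hTdef, Int.card_Ioo]
        rcases le_or_gt (⌈(q : ℝ) * b⌉ - ⌊(q : ℝ) * a⌋ - 1) 0 with h | h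
        · rw [Int.toNat_of_nonpos h]
          have : 0 ≤ (q : ℝ) * d := mul_nonneg hq0.le hd0
          simpa using by linarith
        · have he : ((⌈(q : ℝ) * b⌉ - ⌊(q : ℝ) * a⌋ - 1).toNat : ℝ)
              = ((⌈(q : ℝ) * b⌉ : ℝ) - (⌊(q : ℝ) * a⌋ : ℝ) - 1) := by
            rw [← Int.cast_natCast, Int.toNat_of_nonneg h.le]
            push_cast
            ring
          rw [he]
          have h1 : ((⌈(q : ℝ) * b⌉ : ℝ)) < (q : ℝ) * b + 1 := Int.ceil_lt_add_one _
          have h2 : (q : ℝ) * a - 1 < ((⌊(q : ℝ) * a⌋ : ℝ)) := Int.sub_one_lt_floor _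
          have h3 : b - a ≤ d := by rw [hddef]; exact le_abs_self _
          nlinarith
      have hcore : ((q : ℝ) * d + 1) * (2 * (γ / (q : ℝ) ^ (τ + 1))) ≤ K * (((q : ℝ)) ^ 2)⁻¹ := by
        set x : ℝ := (q : ℝ) with hxdef
        have h1 : x * d + 1 ≤ x * (d + 1 / Q) := by
          have h2 : 1 ≤ x / Q := (one_le_div hQpos).mpr hqQ
          have h3 : x * (d + 1 / Q) = x * d + x / Q := by ring
          linarith
        have e2 : x / x ^ (τ + 1) = x ^ ((1 : ℝ) - (τ + 1)) := by
          rw [Real.rpow_sub hq0, Real.rpow_one]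
        have einv : (x ^ 2)⁻¹ = x ^ (-(2 : ℝ)) := by
          rw [show (-(2:ℝ)) = -((2:ℕ):ℝ) by norm_num, Real.rpow_neg hq0.le, Real.rpow_natCast]
        have e3 : x ^ ((1 : ℝ) - (τ + 1)) = x ^ ((2 : ℝ) - τ) * (x ^ 2)⁻¹ := by
          rw [einv, ← Real.rpow_add hq0]
          ring_nf
        have e4 : x ^ ((2 : ℝ) - τ) ≤ Q ^ ((2 : ℝ) - τ) :=
          Real.rpow_le_rpow_of_nonpos hQpos hqQ (by linarith)
        have hx2inv : (0 : ℝ) ≤ (x ^ 2)⁻¹ := by positivity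
        calc (x * d + 1) * (2 * (γ / x ^ (τ + 1)))
            = (x * d + 1) * (2 * γ) / x ^ (τ + 1) := by ring
          _ ≤ x * (d + 1 / Q) * (2 * γ) / x ^ (τ + 1) := by
              apply div_le_div_of_nonneg_right ?_ hxp.le
              exact mul_le_mul_of_nonneg_right h1 (by linarith)
          _ = 2 * γ * (d + 1 / Q) * (x / x ^ (τ + 1)) := by ring
          _ = 2 * γ * (d + 1 / Q) * (x ^ ((2 : ℝ) - τ) * (x ^ 2)⁻¹) := by rw [e2, e3]
          _ ≤ 2 * γ * (d + 1 / Q) * (Q ^ ((2 : ℝ) - τ) * (x ^ 2)⁻¹) := by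
              apply mul_le_mul_of_nonneg_left ?_ (mul_nonneg (by linarith : (0:ℝ) ≤ 2 * γ) hdQ0)
              exact mul_le_mul_of_nonneg_right e4 hx2inv
          _ = K * (x ^ 2)⁻¹ := by rw [hKdef]; ring
      calc volume (⋃ (p : ℤ) (_ : Q ≤ (q : ℝ)) (_ : (p : ℝ) / q ∈ Set.Ioo a b),
            Set.Ioo ((p : ℝ) / q - γ / (q : ℝ) ^ (τ + 1)) ((p : ℝ) / q + γ / (q : ℝ) ^ (τ + 1)))
          ≤ ∑' p : ℤ, volume (⋃ (_ : Q ≤ (q : ℝ)) (_ : (p : ℝ) / q ∈ Set.Ioo a b),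
            Set.Ioo ((p : ℝ) / q - γ / (q : ℝ) ^ (τ + 1)) ((p : ℝ) / q + γ / (q : ℝ) ^ (τ + 1))) :=
            measure_iUnion_le _
        _ = ∑ p ∈ T, volume (⋃ (_ : Q ≤ (q : ℝ)) (_ : (p : ℝ) / q ∈ Set.Ioo a b),
            Set.Ioo ((p : ℝ) / q - γ / (q : ℝ) ^ (τ + 1)) ((p : ℝ) / q + γ / (q : ℝ) ^ (τ + 1))) := by
            apply tsum_eq_sum
            intro p hp
            have h2 : ¬ ((p : ℝ) / q ∈ Set.Ioo a b) := fun h => hp (hsub p h)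
            simp [h2]
        _ ≤ ∑ p ∈ T, ENNReal.ofReal (2 * (γ / (q : ℝ) ^ (τ + 1))) := by
            apply Finset.sum_le_sum
            intro p _
            have hIoo : volume (Set.Ioo ((p : ℝ) / q - γ / (q : ℝ) ^ (τ + 1))
                ((p : ℝ) / q + γ / (q : ℝ) ^ (τ + 1)))
                = ENNReal.ofReal (2 * (γ / (q : ℝ) ^ (τ + 1))) := by
              rw [Real.volume_Ioo]
              congr 1
              ring
            exact le_trans (measure_mono (Set.iUnion_subset fun _ =>
              Set.iUnion_subset fun _ => subset_rfl)) hIoo.le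
        _ = (T.card : ENNReal) * ENNReal.ofReal (2 * (γ / (q : ℝ) ^ (τ + 1))) := by
            rw [Finset.sum_const, nsmul_eq_mul]
        _ ≤ ENNReal.ofReal ((q : ℝ) * d + 1) * ENNReal.ofReal (2 * (γ / (q : ℝ) ^ (τ + 1))) := by
            apply mul_le_mul_left
            rw [← ENNReal.ofReal_natCast]
            exact ENNReal.ofReal_le_ofReal hcard
        _ = ENNReal.ofReal (((q : ℝ) * d + 1) * (2 * (γ / (q : ℝ) ^ (τ + 1)))) := by
            rw [← ENNReal.ofReal_mul (add_nonneg (mul_nonneg hq0.le hd0) zero_le_one)]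
        _ ≤ ENNReal.ofReal (K * (((q : ℝ)) ^ 2)⁻¹) := ENNReal.ofReal_le_ofReal hcore
    · rw [if_neg hq]
      have hcond : ¬ (Q ≤ (q : ℝ)) := by
        intro h
        exact hq (by exact_mod_cast Nat.ceil_le.mpr h)
      have hempty : (⋃ (p : ℤ) (_ : Q ≤ (q : ℝ)) (_ : (p : ℝ) / q ∈ Set.Ioo a b),
          Set.Ioo ((p : ℝ) / q - γ / (q : ℝ) ^ (τ + 1)) ((p : ℝ) / q + γ / (q : ℝ) ^ (τ + 1))) = ∅ := by
        apply Set.iUnion_eq_empty.mpr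
        intro p
        apply Set.iUnion_eq_empty.mpr
        intro h
        exact absurd h hcond
      rw [hempty, measure_empty]
  have hC : (∑' q : ℕ, if m ≤ q then ENNReal.ofReal (K * (((q : ℝ)) ^ 2)⁻¹) else 0)
      ≤ ENNReal.ofReal (K * (2 / Q)) := by
    rw [ENNReal.tsum_eq_iSup_sum]
    apply iSup_le
    intro s
    set M : ℕ := s.sup id + 1 with hMdef
    have hsub : s.filter (fun q => m ≤ q) ⊆ Finset.Ioo (m - 1) M := by
      intro q hq
      rw [Finset.mem_filter] at hq
      rw [Finset.mem_Ioo]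
      refine ⟨by omega, ?_⟩
      have := Finset.le_sup (f := id) hq.1
      simp only [id] at this
      omega
    calc (∑ q ∈ s, if m ≤ q then ENNReal.ofReal (K * (((q : ℝ)) ^ 2)⁻¹) else 0)
        = ∑ q ∈ s.filter (fun q => m ≤ q), ENNReal.ofReal (K * (((q : ℝ)) ^ 2)⁻¹) :=
          (Finset.sum_filter _ _).symm
      _ ≤ ∑ q ∈ Finset.Ioo (m - 1) M, ENNReal.ofReal (K * (((q : ℝ)) ^ 2)⁻¹) :=
          Finset.sum_le_sum_of_subset hsub
      _ = ENNReal.ofReal (∑ q ∈ Finset.Ioo (m - 1) M, K * (((q : ℝ)) ^ 2)⁻¹) := by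
          rw [ENNReal.ofReal_sum_of_nonneg]
          intro i _
          have : (0:ℝ) ≤ (((i : ℝ)) ^ 2)⁻¹ := by positivity
          exact mul_nonneg hK0 this
      _ ≤ ENNReal.ofReal (K * (2 / Q)) := by
          apply ENNReal.ofReal_le_ofReal
          rw [← Finset.mul_sum]
          have hsum := sum_Ioo_inv_sq_le (α := ℝ) (m - 1) M
          have hcast : (((m - 1 : ℕ) : ℝ)) + 1 = (m : ℝ) := by
            have h1 : 1 ≤ m := by omega
            push_cast [h1]
            ring
          rw [hcast] at hsum
          have h2m : (2 : ℝ) / m ≤ 2 / Q := by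
            apply div_le_div_of_nonneg_left (by norm_num) hQpos hQm
          calc K * ∑ q ∈ Finset.Ioo (m - 1) M, (((q : ℝ)) ^ 2)⁻¹
              ≤ K * (2 / (m : ℝ)) := mul_le_mul_of_nonneg_left hsum hK0
            _ ≤ K * (2 / Q) := mul_le_mul_of_nonneg_left h2m hK0
  have hD : K * (2 / Q) < 2 * γ / Q ^ (τ - 1) := by
    have hQ1τ : (0 : ℝ) < Q ^ ((1 : ℝ) - τ) := Real.rpow_pos_of_pos hQpos _
    have e1 : K * (2 / Q) = 4 * γ * (d + 1 / Q) * Q ^ ((1 : ℝ) - τ) := by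
      rw [hKdef, show Q ^ ((1:ℝ) - τ) = Q ^ ((2:ℝ) - τ) / Q by
        rw [show ((1:ℝ) - τ) = ((2:ℝ) - τ) - 1 by ring, Real.rpow_sub hQpos, Real.rpow_one]]
      ring
    have e2 : 2 * γ / Q ^ (τ - 1) = 2 * γ * Q ^ ((1 : ℝ) - τ) := by
      rw [show (1:ℝ) - τ = -(τ - 1) by ring, Real.rpow_neg hQpos.le]
      ring
    rw [e1, e2]
    have hQ8 : 1 / Q ≤ 1 / 8 := by
      apply one_div_le_one_div_of_le (by norm_num) h8Q
    have hsmall : 4 * γ * (d + 1 / Q) < 2 * γ := by nlinarith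
    exact mul_lt_mul_of_pos_right hsmall hQ1τ
  calc volume (⋃ (q : ℕ) (p : ℤ) (_ : Q ≤ (q : ℝ)) (_ : (p : ℝ) / q ∈ Set.Ioo a b),
        Set.Ioo ((p : ℝ) / q - γ / (q : ℝ) ^ (τ + 1)) ((p : ℝ) / q + γ / (q : ℝ) ^ (τ + 1)))
      ≤ ∑' q : ℕ, volume (⋃ (p : ℤ) (_ : Q ≤ (q : ℝ)) (_ : (p : ℝ) / q ∈ Set.Ioo a b),
        Set.Ioo ((p : ℝ) / q - γ / (q : ℝ) ^ (τ + 1)) ((p : ℝ) / q + γ / (q : ℝ) ^ (τ + 1))) :=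
        measure_iUnion_le _
    _ ≤ (∑' q : ℕ, if m ≤ q then ENNReal.ofReal (K * (((q : ℝ)) ^ 2)⁻¹) else 0) :=
        ENNReal.tsum_le_tsum hB
    _ ≤ ENNReal.ofReal (K * (2 / Q)) := hC
    _ < ENNReal.ofReal (2 * γ / Q ^ (τ - 1)) := by
        rw [ENNReal.ofReal_lt_ofReal_iff
          (div_pos (by linarith) (Real.rpow_pos_of_pos hQpos _))]
        exact hD
end

section
/- Let τ > 3, γ ∈ (0,1/2), α ∈ D_{γ,τ} with convergents p_n/q_n. There exists N₁ such that for all even n > N₁ and any rational p/q with p_n/q_n < p/q < p_{n+2}/q_{n+2} and q < q_{n+2}, one has p/q + γ/q^{τ+1} < p_{n+2}/q_{n+2} − γ/q_{n+2}^{τ+1} − 2γ/q_{n+2}^{τ−1}. -/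
open Set MeasureTheory

namespace Stmt16Aux

open GenContFract

lemma nint_le (x : ℝ) (p : ℤ) : nint x ≤ |x - p| := by
  apply ciInf_le
  exact ⟨0, by rintro y ⟨i, rfl⟩; exact abs_nonneg _⟩

lemma notTerm (α : ℝ) (hirr : Irrational α) (n : ℕ) : ¬(GenContFract.of α).TerminatedAt n := by
  intro h
  obtain ⟨q, hq⟩ := (terminates_iff_rat α).mp ⟨n, h⟩
  exact hirr ⟨q, hq.symm⟩

lemma stream_some (α : ℝ) (hirr : Irrational α) (n : ℕ) :
    ∃ ifp, IntFractPair.stream α n = some ifp ∧ ifp.fr ≠ 0 := by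
  have h1 : IntFractPair.stream α (n + 1) ≠ none := by
    intro h
    exact notTerm α hirr n (of_terminatedAt_n_iff_succ_nth_intFractPair_stream_eq_none.mpr h)
  obtain ⟨ifp1, hifp1⟩ := Option.ne_none_iff_exists'.mp h1
  obtain ⟨ifp, h, hfr, -⟩ := IntFractPair.succ_nth_stream_eq_some_iff.mp hifp1
  exact ⟨ifp, h, hfr⟩

lemma one_le_den (α : ℝ) (hirr : Irrational α) (n : ℕ) : (1 : ℝ) ≤ (GenContFract.of α).dens n := by
  have h : (Nat.fib (n + 1) : ℝ) ≤ (GenContFract.of α).dens n :=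
    succ_nth_fib_le_of_nth_den (Or.inr (notTerm α hirr _))
  have h2 : 1 ≤ Nat.fib (n + 1) := Nat.fib_pos.mpr n.succ_pos
  calc (1 : ℝ) ≤ (Nat.fib (n + 1) : ℝ) := by exact_mod_cast h2
    _ ≤ _ := h

lemma den_pos (α : ℝ) (hirr : Irrational α) (n : ℕ) : (0 : ℝ) < (GenContFract.of α).dens n :=
  lt_of_lt_of_le one_pos (one_le_den α hirr n)

lemma den_mono' (α : ℝ) (m k : ℕ) : (GenContFract.of α).dens m ≤ (GenContFract.of α).dens (m + k) := by
  induction k with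
  | zero => exact le_rfl
  | succ k ih => exact ih.trans of_den_mono

lemma den_le (α : ℝ) (hirr : Irrational α) {m n : ℕ} (h : m ≤ n) :
    (GenContFract.of α).dens m ≤ (GenContFract.of α).dens n := by
  obtain ⟨k, rfl⟩ := Nat.exists_eq_add_of_le h
  exact den_mono' α m k

lemma n_le_den (α : ℝ) (hirr : Irrational α) (n : ℕ) (hn : 5 ≤ n) : (n : ℝ) ≤ (GenContFract.of α).dens n := by
  have h : (Nat.fib (n + 1) : ℝ) ≤ (GenContFract.of α).dens n :=
    succ_nth_fib_le_of_nth_den (Or.inr (notTerm α hirr _))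
  have h2 : n ≤ Nat.fib (n + 1) :=
    le_trans (Nat.le_fib_self hn) (Nat.fib_le_fib_succ)
  calc (n : ℝ) ≤ (Nat.fib (n + 1) : ℝ) := by exact_mod_cast h2
    _ ≤ _ := h

lemma sign_eq (α : ℝ) (hirr : Irrational α) (n : ℕ) : ∃ D : ℝ, 0 < D ∧ α - (GenContFract.of α).convs n = (-1) ^ n / D := by
  obtain ⟨ifp, hst, hfr⟩ := stream_some α hirr n
  have tmp := sub_convs_eq hst
  simp only [if_neg hfr] at tmp
  refine ⟨_, ?_, tmp⟩
  have hBd : ((GenContFract.of α).contsAux (n + 1)).b = (GenContFract.of α).dens n := by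
    rw [den_eq_conts_b, nth_cont_eq_succ_nth_contAux]
  have hB : (0 : ℝ) < ((GenContFract.of α).contsAux (n + 1)).b := by
    rw [hBd]; exact den_pos α hirr n
  have hpB : (0 : ℝ) ≤ ((GenContFract.of α).contsAux n).b := zero_le_of_contsAux_b
  have hfr0 : 0 < ifp.fr := (IntFractPair.nth_stream_fr_nonneg hst).lt_of_ne' hfr
  have : 0 < ifp.fr⁻¹ := inv_pos.mpr hfr0
  positivity

lemma conv_lt (α : ℝ) (hirr : Irrational α) {n : ℕ} (he : Even n) : (GenContFract.of α).convs n < α := by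
  obtain ⟨D, hD, hEq⟩ := sign_eq α hirr n
  rw [he.neg_one_pow] at hEq
  have : 0 < α - (GenContFract.of α).convs n := by rw [hEq]; positivity
  linarith

lemma lt_conv (α : ℝ) (hirr : Irrational α) {n : ℕ} (ho : Odd n) : α < (GenContFract.of α).convs n := by
  obtain ⟨D, hD, hEq⟩ := sign_eq α hirr n
  rw [ho.neg_one_pow] at hEq
  have h1 : α - (GenContFract.of α).convs n = -(1 / D) := by rw [hEq]; ring
  have : 0 < 1 / D := by positivity
  linarith

lemma conv_diff (α : ℝ) (hirr : Irrational α) (n : ℕ) :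
    (GenContFract.of α).convs (n + 1) - (GenContFract.of α).convs n
      = (-1) ^ n / ((GenContFract.of α).dens n * (GenContFract.of α).dens (n + 1)) := by
  have hdet := (SimpContFract.of α).determinant (n := n) (notTerm α hirr n)
  have hcoe : (↑(SimpContFract.of α) : GenContFract ℝ) = GenContFract.of α := rfl
  rw [hcoe] at hdet
  have h0 : (GenContFract.of α).dens n ≠ 0 := (den_pos α hirr n).ne'
  have h1 : (GenContFract.of α).dens (n + 1) ≠ 0 := (den_pos α hirr (n + 1)).ne'
  rw [conv_eq_num_div_den, conv_eq_num_div_den, div_sub_div _ _ h1 h0]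
  rw [div_eq_div_iff (by positivity) (by positivity)]
  have hps : ((-1 : ℝ)) ^ (n + 1) = -((-1) ^ n) := by ring
  rw [hps] at hdet
  linear_combination (-((GenContFract.of α).dens n * (GenContFract.of α).dens (n + 1))) * hdet

lemma conv_step (α : ℝ) (hirr : Irrational α) {n : ℕ} (he : Even n) : (GenContFract.of α).convs n ≤ (GenContFract.of α).convs (n + 2) := by
  have h1 := conv_diff α hirr n
  have h2 := conv_diff α hirr (n + 1)
  rw [he.neg_one_pow] at h1
  rw [he.add_one.neg_one_pow] at h2
  set d0 := (GenContFract.of α).dens n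
  set d1 := (GenContFract.of α).dens (n + 1)
  set d2 := (GenContFract.of α).dens (n + 2)
  have hd0 : (0:ℝ) < d0 := den_pos α hirr n
  have hd1 : (0:ℝ) < d1 := den_pos α hirr (n + 1)
  have hd2 : (0:ℝ) < d2 := den_pos α hirr (n + 2)
  have hle : d0 ≤ d2 := den_le α hirr (by omega)
  have h3 : d0 * d1 ≤ d1 * d2 := by nlinarith
  have h4 : 1 / (d1 * d2) ≤ 1 / (d0 * d1) :=
    one_div_le_one_div_of_le (by positivity) h3
  have h2' : (GenContFract.of α).convs (n + 2) - (GenContFract.of α).convs (n + 1) = -(1 / (d1 * d2)) := by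
    rw [h2]; ring
  linarith

lemma conv_chain (α : ℝ) (hirr : Irrational α) {n : ℕ} (he : Even n) (k : ℕ) :
    (GenContFract.of α).convs n ≤ (GenContFract.of α).convs (n + 2 * k) := by
  induction k with
  | zero => exact le_rfl
  | succ k ih =>
      have hstep := conv_step α hirr (n := n + 2 * k) (by
        rcases he with ⟨r, hr⟩; exact ⟨r + k, by omega⟩)
      have : n + 2 * (k + 1) = n + 2 * k + 2 := by ring
      rw [this]
      exact ih.trans hstep

lemma int_num_den (α : ℝ) (hirr : Irrational α) (n : ℕ) :
    (∃ a : ℤ, (GenContFract.of α).nums n = a) ∧ (∃ b : ℤ, (GenContFract.of α).dens n = b) := by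
  suffices H : ∀ m : ℕ, ((∃ a : ℤ, (GenContFract.of α).nums m = a) ∧ (∃ b : ℤ, (GenContFract.of α).dens m = b)) ∧
      ((∃ a : ℤ, (GenContFract.of α).nums (m + 1) = a) ∧ (∃ b : ℤ, (GenContFract.of α).dens (m + 1) = b)) from (H n).1
  intro m
  induction m with
  | zero =>
      constructor
      · constructor
        · exact ⟨⌊α⌋, by rw [num_eq_conts_a, zeroth_cont_eq_h_one, of_h_eq_floor]⟩
        · exact ⟨1, by rw [den_eq_conts_b, zeroth_cont_eq_h_one]; norm_num⟩
      · obtain ⟨gp, hgp⟩ : ∃ gp, (GenContFract.of α).s.get? 0 = some gp := by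
          have := notTerm α hirr 0
          rw [terminatedAt_iff_s_none] at this
          exact Option.ne_none_iff_exists'.mp this
        obtain ⟨ha1, z, hz⟩ := of_partNum_eq_one_and_exists_int_partDen_eq hgp
        constructor
        · exact ⟨z * ⌊α⌋ + 1, by
            rw [first_num_eq hgp, ha1, hz, of_h_eq_floor]; push_cast; ring⟩
        · exact ⟨z, by rw [first_den_eq hgp, hz]⟩
  | succ m ih =>
      refine ⟨ih.2, ?_⟩
      obtain ⟨⟨a0, ha0⟩, ⟨b0, hb0⟩⟩ := ih.1
      obtain ⟨⟨a1, ha1⟩, ⟨b1, hb1⟩⟩ := ih.2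
      obtain ⟨gp, hgp⟩ : ∃ gp, (GenContFract.of α).s.get? (m + 1) = some gp := by
        have := notTerm α hirr (m + 1)
        rw [terminatedAt_iff_s_none] at this
        exact Option.ne_none_iff_exists'.mp this
      obtain ⟨hA1, z, hz⟩ := of_partNum_eq_one_and_exists_int_partDen_eq hgp
      constructor
      · exact ⟨z * a1 + a0, by
          rw [nums_recurrence hgp ha0 ha1, hA1, hz]; push_cast; ring⟩
      · exact ⟨z * b1 + b0, by
          rw [dens_recurrence hgp hb0 hb1, hA1, hz]; push_cast; ring⟩

lemma abs_sub_le (α : ℝ) (hirr : Irrational α) (n : ℕ) :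
    |α - (GenContFract.of α).convs n| ≤ 1 / ((GenContFract.of α).dens n * (GenContFract.of α).dens n) := by
  refine (abs_sub_convs_le (notTerm α hirr n)).trans ?_
  have h := of_den_mono (v := α) (n := n)
  have h0 : (0:ℝ) < (GenContFract.of α).dens n := den_pos α hirr n
  apply one_div_le_one_div_of_le (by positivity)
  nlinarith

end Stmt16Aux
set_option maxHeartbeats 2000000 in
theorem stmt16 (γ τ : ℝ) (hγ : γ ∈ Set.Ioo (0:ℝ) (1/2)) (hτ : 3 < τ) (α : ℝ) (hα : α ∈ Dio γ τ)
    (hirr : Irrational α) :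
    ∃ N₁ : ℕ, ∀ n > N₁, Even n → ∀ (p : ℤ) (q : ℕ), 0 < q → (q : ℝ) < qden α (n + 2) →
      (p : ℝ) / q ∈ Set.Ioo (pnum α n / qden α n) (pnum α (n + 2) / qden α (n + 2)) →
      (p : ℝ) / q + γ / (q : ℝ) ^ (τ + 1) <
        pnum α (n + 2) / qden α (n + 2) - γ / (qden α (n + 2)) ^ (τ + 1)
          - 2 * γ / (qden α (n + 2)) ^ (τ - 1) := by
  open Stmt16Aux GenContFract in
  · obtain ⟨hαIoo, hDio⟩ := hα
    obtain ⟨hγ0, hγ2⟩ := hγ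
    obtain ⟨M, hM⟩ := exists_nat_ge (max ((9:ℝ) ^ (τ - 3)⁻¹) (2 ^ (τ + 1) / γ))
    refine ⟨max 5 M, ?_⟩
    intro n hn hev p q hq hqlt hmem
    have hn5 : 5 ≤ n := (lt_of_le_of_lt (le_max_left 5 M) hn).le
    have hnM : (M : ℝ) < n := by exact_mod_cast lt_of_le_of_lt (le_max_right 5 M) hn
    have hMA : (9:ℝ) ^ (τ - 3)⁻¹ ≤ M := le_trans (le_max_left _ _) hM
    have hMB : (2:ℝ) ^ (τ + 1) / γ ≤ M := le_trans (le_max_right _ _) hM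
    have hqden : ∀ m, qden α m = (GenContFract.of α).dens m := fun _ => rfl
    have hpnum : ∀ m, pnum α m = (GenContFract.of α).nums m := fun _ => rfl
    simp only [hqden, hpnum, Set.mem_Ioo] at hqlt hmem ⊢
    obtain ⟨hmem1, hmem2⟩ := hmem
    rw [← conv_eq_num_div_den] at hmem1
    rw [← conv_eq_num_div_den] at hmem2
    rw [← conv_eq_num_div_den]
    have hQ0 : (0:ℝ) < (q:ℝ) := by exact_mod_cast hq
    set D : ℝ := (GenContFract.of α).dens (n + 2) with hDdef
    have hqltD : (q:ℝ) < D := hqlt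
    have hD1 : (1:ℝ) ≤ D := one_le_den α hirr (n + 2)
    have hD0 : (0:ℝ) < D := lt_of_lt_of_le one_pos hD1
    have hDD : (GenContFract.of α).dens n ≤ D := den_le α hirr (by omega)
    have hD2' : α - (GenContFract.of α).convs (n + 2) ≤ 1 / (D * D) :=
      le_trans (le_abs_self _) (abs_sub_le α hirr (n + 2))
    obtain ⟨⟨a, ha⟩, ⟨b, hb⟩⟩ := int_num_den α hirr (n + 2)
    have hbD : (b : ℝ) = D := hb.symm
    clear_value D
    have hev2 : Even (n + 2) := hev.add even_two
    have hconv2 : (GenContFract.of α).convs (n + 2) < α := conv_lt α hirr hev2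
    have hconvn : (GenContFract.of α).convs n < α := conv_lt α hirr hev
    have hpqα : (p : ℝ) / q < α := lt_trans hmem2 hconv2
    have hsubpos : (0:ℝ) < α - (p:ℝ)/q := sub_pos.mpr hpqα
    have hdn : (n:ℝ) ≤ (GenContFract.of α).dens n := n_le_den α hirr n hn5
    have hdnM : (M:ℝ) < (GenContFract.of α).dens n := lt_of_lt_of_le hnM hdn
    -- step 1 : q ≥ 3
    have hq3 : 3 ≤ q := by
      by_contra hq3'
      push_neg at hq3'
      have hq2 : ((q:ℝ)) ≤ 2 := by
        have : q ≤ 2 := by omega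
        exact_mod_cast this
      have hnint : γ / (q:ℝ) ^ τ ≤ nint (q * α) := hDio q hq
      have h1 : nint ((q:ℝ) * α) ≤ |(q:ℝ) * α - p| := nint_le _ _
      have habs : |(q:ℝ) * α - p| = (q:ℝ) * (α - p / q) := by
        rw [show (q:ℝ) * α - p = (q:ℝ) * (α - p / q) by field_simp]
        exact abs_of_pos (mul_pos hQ0 hsubpos)
      have hlow : γ / (q:ℝ) ^ (τ + 1) ≤ α - p / q := by
        have hrw : (q:ℝ) ^ (τ + 1) = (q:ℝ) ^ τ * q := Real.rpow_add_one hQ0.ne' τ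
        rw [hrw, ← div_div, div_le_iff₀ hQ0]
        calc γ / (q:ℝ) ^ τ ≤ |(q:ℝ) * α - p| := le_trans hnint h1
          _ = (α - p / q) * q := by rw [habs]; ring
      have hup : α - (GenContFract.of α).convs n
          ≤ 1 / ((GenContFract.of α).dens n * (GenContFract.of α).dens n) :=
        le_trans (le_abs_self _) (abs_sub_le α hirr n)
      have hupn : α - (GenContFract.of α).convs n ≤ 1 / (n : ℝ) := by
        refine le_trans hup ?_
        apply one_div_le_one_div_of_le (by positivity)
        calc (n:ℝ) ≤ (GenContFract.of α).dens n := hdn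
          _ = (GenContFract.of α).dens n * 1 := by ring
          _ ≤ (GenContFract.of α).dens n * (GenContFract.of α).dens n := by
              apply mul_le_mul_of_nonneg_left (one_le_den α hirr n)
              linarith [one_le_den α hirr n]
      have hn1 : (1:ℝ) / (n:ℝ) ≤ γ / 2 ^ (τ + 1) := by
        rw [div_le_div_iff₀ (by positivity) (by positivity)]
        have h2 : (2:ℝ) ^ (τ + 1) / γ ≤ (n:ℝ) := le_trans hMB (le_of_lt hnM)
        rw [div_le_iff₀ hγ0] at h2
        linarith
      have hmono : γ / 2 ^ (τ + 1) ≤ γ / (q:ℝ) ^ (τ + 1) := by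
        apply div_le_div_of_nonneg_left hγ0.le (by positivity)
        exact Real.rpow_le_rpow hQ0.le hq2 (by linarith)
      linarith [hmem1]
    have hQ3 : (3:ℝ) ≤ (q:ℝ) := by exact_mod_cast hq3
    -- step 2 : Legendre lower bound
    set r : ℚ := Rat.divInt p (q : ℤ) with hr
    have hrcast : (r : ℝ) = (p : ℝ) / q := by
      rw [hr, Rat.divInt_eq_div]
      push_cast
      ring
    have hrden : (r.den : ℝ) ≤ (q:ℝ) := by
      have hdvd : (r.den : ℤ) ∣ (q : ℤ) := Rat.den_dvd p (q : ℤ)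
      have := Int.le_of_dvd (by exact_mod_cast hq) hdvd
      exact_mod_cast this
    have hrden0 : (0:ℝ) < r.den := by exact_mod_cast r.pos
    clear_value r
    have hnotconv : ∀ m, (GenContFract.of α).convs m ≠ (r : ℝ) := by
      intro m hm
      rw [hrcast] at hm
      rcases Nat.even_or_odd m with hme | hmo
      · rcases le_or_gt m n with hle | hgt
        · obtain ⟨k, hk⟩ : ∃ k, n - m = k + k := by
            have : Even (n - m) := (Nat.even_sub hle).mpr (iff_of_true hev hme)
            exact this
          have hkn : n = m + 2 * k := by omega
          have hch := conv_chain α hirr hme k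
          rw [← hkn] at hch
          rw [hm] at hch
          linarith
        · have hne : m ≠ n + 1 := by
            rintro rfl
            exact (Nat.even_add_one.mp hme) hev
          have hge : n + 2 ≤ m := by omega
          obtain ⟨k, hk⟩ : ∃ k, m - (n + 2) = k + k := by
            have : Even (m - (n + 2)) := (Nat.even_sub hge).mpr (iff_of_true hme hev2)
            exact this
          have hkm : m = (n + 2) + 2 * k := by omega
          have hch := conv_chain α hirr hev2 k
          rw [← hkm, hm] at hch
          linarith
      · have := lt_conv α hirr hmo
        rw [hm] at this
        linarith
    have hleg : 1 / (2 * (q:ℝ) ^ 2) ≤ |α - (p:ℝ)/q| := by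
      by_contra hcon
      push_neg at hcon
      have h' : |α - (r:ℝ)| < 1 / (2 * (r.den : ℝ) ^ 2) := by
        rw [hrcast]
        refine hcon.trans_le ?_
        apply one_div_le_one_div_of_le (by positivity)
        have h5 : (r.den:ℝ)^2 ≤ (q:ℝ)^2 := pow_le_pow_left₀ hrden0.le hrden 2
        linarith
      obtain ⟨m, hm⟩ := Real.exists_convs_eq_rat h'
      exact hnotconv m hm
    have hAge : 1 / (2 * (q:ℝ) ^ 2) ≤ α - (p:ℝ)/q := by
      rwa [abs_of_pos hsubpos] at hleg
    -- step 3 : upper bound on α - convs (n+2)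
    have hD2 := hD2'
    have hg1 : 1 / (2 * (q:ℝ) ^ 2) - 1 / (D * D)
        ≤ (GenContFract.of α).convs (n + 2) - (p:ℝ)/q := by linarith
    -- step 4 : rational gap
    have hb0 : (0:ℝ) < (b:ℝ) := by rw [hbD]; exact hD0
    have hconv2eq : (GenContFract.of α).convs (n + 2) = (a : ℝ) / (b : ℝ) := by
      rw [conv_eq_num_div_den, ha, hb]
    have hpqab : (p : ℝ) / q < (a:ℝ) / (b:ℝ) := by rw [← hconv2eq]; exact hmem2
    have hint : p * b + 1 ≤ a * q := by
      have h1 : (p:ℝ) * b < (a:ℝ) * q := by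
        rw [div_lt_div_iff₀ hQ0 hb0] at hpqab
        linarith
      have h2 : (p * b : ℤ) < a * q := by exact_mod_cast h1
      omega
    have hg2 : 1 / ((q:ℝ) * D) ≤ (GenContFract.of α).convs (n + 2) - (p:ℝ)/q := by
      rw [hconv2eq, div_sub_div _ _ hb0.ne' hQ0.ne']
      have hnum : (1:ℝ) ≤ (a:ℝ) * q - (b:ℝ) * p := by
        have h3 : ((p * b + 1 : ℤ) : ℝ) ≤ ((a * q : ℤ) : ℝ) := by exact_mod_cast hint
        push_cast at h3
        linarith
      rw [← hbD]
      have hpos : (0:ℝ) < (b:ℝ) * q := by positivity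
      calc 1 / ((q:ℝ) * (b:ℝ)) = 1 / ((b:ℝ) * q) := by ring_nf
        _ ≤ ((a:ℝ) * q - (b:ℝ) * p) / ((b:ℝ) * q) := (div_le_div_iff_of_pos_right hpos).mpr hnum
        _ = _ := by ring_nf
    -- step 5 : gap > 1/(4q^2)
    have hDD2 : 1 / (D * D) < 1 / ((q:ℝ) * D) := by
      apply one_div_lt_one_div_of_lt (by positivity)
      exact mul_lt_mul_of_pos_right hqltD hD0
    have hgap : 1 / (4 * (q:ℝ) ^ 2) < (GenContFract.of α).convs (n + 2) - (p:ℝ)/q := by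
      have h44 : (1:ℝ) / (4 * (q:ℝ) ^ 2) = (1 / (2 * (q:ℝ) ^ 2)) / 2 := by
        rw [div_div]; ring_nf
      rw [h44]
      linarith [hg1, hg2, hDD2]
    -- step 6 : rpow estimates
    have hτ1 : (0:ℝ) < τ - 3 := by linarith
    have hDM : (9:ℝ) ^ (τ - 3)⁻¹ ≤ D := le_trans hMA (le_of_lt (lt_of_lt_of_le hdnM hDD))
    have hd9 : (9:ℝ) ≤ D ^ (τ - 3) := by
      have h9 : ((9:ℝ) ^ (τ - 3)⁻¹) ^ (τ - 3) = 9 := Real.rpow_inv_rpow (by norm_num) hτ1.ne'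
      calc (9:ℝ) = ((9:ℝ) ^ (τ - 3)⁻¹) ^ (τ - 3) := h9.symm
        _ ≤ D ^ (τ - 3) := Real.rpow_le_rpow (by positivity) hDM hτ1.le
    have hsq : (3:ℝ) ^ (2:ℝ) = 9 := by
      rw [show (2:ℝ) = ((2:ℕ):ℝ) by norm_num, Real.rpow_natCast]; norm_num
    have hQτ : 9 * (q:ℝ) ^ 2 ≤ (q:ℝ) ^ (τ + 1) := by
      have e1 : (q:ℝ) ^ (τ + 1) = (q:ℝ) ^ (τ - 1) * (q:ℝ) ^ (2:ℕ) := by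
        rw [← Real.rpow_natCast (q:ℝ) 2, ← Real.rpow_add hQ0]
        congr 1
        push_cast
        ring
      have e2 : (9:ℝ) ≤ (q:ℝ) ^ (τ - 1) := by
        calc (9:ℝ) = (3:ℝ) ^ (2:ℝ) := hsq.symm
          _ ≤ (3:ℝ) ^ (τ - 1) := Real.rpow_le_rpow_of_exponent_le (by norm_num) (by linarith)
          _ ≤ (q:ℝ) ^ (τ - 1) := Real.rpow_le_rpow (by norm_num) hQ3 (by linarith)
      rw [e1]
      have e3 : (0:ℝ) ≤ (q:ℝ) ^ (2:ℕ) := by positivity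
      have h5 := mul_le_mul_of_nonneg_right e2 e3
      linarith
    have hDτ1 : 9 * (q:ℝ) ^ 2 ≤ D ^ (τ - 1) := by
      have e1 : D ^ (τ - 1) = D ^ (τ - 3) * D ^ (2:ℕ) := by
        rw [← Real.rpow_natCast D 2, ← Real.rpow_add hD0]
        congr 1
        push_cast
        ring
      have e3 : (q:ℝ) ^ (2:ℕ) ≤ D ^ (2:ℕ) := by
        apply pow_le_pow_left₀ hQ0.le (le_of_lt hqltD)
      rw [e1]
      have h5 := mul_le_mul_of_nonneg_right hd9 (by positivity : (0:ℝ) ≤ D ^ (2:ℕ))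
      linarith
    have hDτ2 : 9 * (q:ℝ) ^ 2 ≤ D ^ (τ + 1) :=
      le_trans hDτ1 (Real.rpow_le_rpow_of_exponent_le hD1 (by linarith))
    -- step 7 : finish
    have t1 : γ / (q:ℝ) ^ (τ + 1) ≤ γ / (9 * (q:ℝ) ^ 2) :=
      div_le_div_of_nonneg_left hγ0.le (by positivity) hQτ
    have t2 : γ / D ^ (τ + 1) ≤ γ / (9 * (q:ℝ) ^ 2) :=
      div_le_div_of_nonneg_left hγ0.le (by positivity) hDτ2
    have t3 : 2 * γ / D ^ (τ - 1) ≤ 2 * (γ / (9 * (q:ℝ) ^ 2)) := by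
      rw [mul_div_assoc]
      have h4 := div_le_div_of_nonneg_left hγ0.le
        (by positivity : (0:ℝ) < 9 * (q:ℝ) ^ 2) hDτ1
      linarith
    have hfin : 4 * (γ / (9 * (q:ℝ) ^ 2)) < 1 / (4 * (q:ℝ) ^ 2) := by
      rw [← mul_div_assoc, div_lt_div_iff₀ (by positivity) (by positivity)]
      have hQsq : (0:ℝ) < (q:ℝ)^2 := by positivity
      have key : γ * ((q:ℝ)^2) < 1/2 * ((q:ℝ)^2) := mul_lt_mul_of_pos_right hγ2 hQsq
      linarith [key, hQsq]
    linarith [t1, t2, t3, hfin, hgap]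
end
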